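/- arXiv:2008.11885 — 2 statements merged into one kernel-verified Lean document; each statement's English description precedes it below -/
import Mathlib

section
/- Let n ≥ 2 and let W_n be the n-uplinked mutual dyad over a field F. The collection {e_{(a,b,1)} + e_{(b,a,1)} − e_{(a,b,j)} − e_{(b,a,j)} : 2 ≤ j ≤ n} is a basis for Z_2 = ker ∂_2, the kernel of the boundary operator restricted to Ω_2(W_n); in particular dim Z_2 = n − 1. -/
open Finset

/-- The non-regular boundary operator `∂_[p] : R^{V^{p+1}} → R^{V^p}`.
It is the linear map acting on the standard basis by
`∂_[p] e_{(v_0,…,v_p)} = ∑_{j=0}^p (−1)^j e_{(v_0,…,v̂_j,…,v_p)}`,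
where `v̂_j` means that the entry `v_j` is omitted from the tuple
(here `fun i => x (j.succAbove i)` is the tuple `x` with its `j`-th entry dropped). -/
noncomputable def pathBoundary (R V : Type) [CommRing R] [Fintype V] [DecidableEq V]
    (p : ℕ) : ((Fin (p + 1) → V) → R) →ₗ[R] ((Fin p → V) → R) where
  toFun f := fun w => ∑ x : Fin (p + 1) → V,
    (∑ j : Fin (p + 1), (-1 : R) ^ (j : ℕ) *
      (if (fun i => x (j.succAbove i)) = w then 1 else 0)) * f x
  map_add' f g := by
    funext w
    simp [mul_add, Finset.sum_add_distrib]
  map_smul' r f := by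
    funext w
    simp [Finset.mul_sum, mul_left_comm]

/-- A tuple of vertices is an allowed path when each consecutive pair is an arc. -/
def IsAllowed {V : Type} (A : V → V → Prop) {q : ℕ} (x : Fin q → V) : Prop :=
  ∀ (i : ℕ) (h : i + 1 < q), A (x ⟨i, Nat.lt_of_succ_lt h⟩) (x ⟨i + 1, h⟩)

/-- `R^{𝒜}`: the subspace of `R^{V^q}` of functions supported on allowed paths
(`q` is the number of vertices in the tuple, so this is `R^{𝒜_{q-1}}`). -/
def allowedSubmodule (R V : Type) [CommRing R] (A : V → V → Prop) (q : ℕ) :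
    Submodule R ((Fin q → V) → R) where
  carrier := {f | ∀ x, ¬ IsAllowed A x → f x = 0}
  add_mem' := fun hf hg x hx => by simp only [Pi.add_apply, hf x hx, hg x hx, add_zero]
  zero_mem' := fun x hx => rfl
  smul_mem' := fun c f hf x hx => by simp only [Pi.smul_apply, hf x hx, smul_zero]

/-- `Ω_p`, the space of invariant `p`-paths:
`Ω_p = {ω ∈ R^{𝒜_p} : ∂_[p] ω ∈ R^{𝒜_{p−1}}}`. -/
noncomputable def invariantPaths (R V : Type) [CommRing R] [Fintype V] [DecidableEq V]
    (A : V → V → Prop) (p : ℕ) : Submodule R ((Fin (p + 1) → V) → R) :=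
  allowedSubmodule R V A (p + 1) ⊓ (allowedSubmodule R V A p).comap (pathBoundary R V p)

/-- The cycles `Z_p = ker ∂_p` of the path complex `(Ω_p, ∂_p)`, `∂_p = ∂_[p]|_{Ω_p}`.
In degree `0` the complex ends at `Ω_0` (the differential out of `Ω_0` is zero),
so `Z_0 = Ω_0`. -/
noncomputable def pathCycles (R V : Type) [CommRing R] [Fintype V] [DecidableEq V]
    (A : V → V → Prop) : (p : ℕ) → Submodule R ((Fin (p + 1) → V) → R)
  | 0 => invariantPaths R V A 0
  | p + 1 => invariantPaths R V A (p + 1) ⊓ LinearMap.ker (pathBoundary R V (p + 1))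

/-- The boundaries `B_p = im ∂_{p+1} = ∂_[p+1](Ω_{p+1})`. -/
noncomputable def pathBoundaries (R V : Type) [CommRing R] [Fintype V] [DecidableEq V]
    (A : V → V → Prop) (p : ℕ) : Submodule R ((Fin (p + 1) → V) → R) :=
  Submodule.map (pathBoundary R V (p + 1)) (invariantPaths R V A (p + 1))

/-- The path homology `H_p = Z_p / B_p` of the digraph `(V, A)` with coefficients in `R`. -/
abbrev pathHomology (R V : Type) [CommRing R] [Fintype V] [DecidableEq V]
    (A : V → V → Prop) (p : ℕ) : Type :=
  pathCycles R V A p ⧸ (pathBoundaries R V A p).comap (pathCycles R V A p).subtype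

/-- The Betti numbers `β_p = dim H_p`. -/
noncomputable def betti (F V : Type) [Field F] [Fintype V] [DecidableEq V]
    (A : V → V → Prop) (p : ℕ) : ℕ :=
  Module.finrank F (pathHomology F V A p)

/-- The reduced Betti numbers `β̃_p = β_p − δ_{p0}` (as integers). -/
noncomputable def tildeBetti (F V : Type) [Field F] [Fintype V] [DecidableEq V]
    (A : V → V → Prop) (p : ℕ) : ℤ :=
  (betti F V A p : ℤ) - (if p = 0 then 1 else 0)

/-- For `n ≥ 1`, the `n`-uplinked mutual dyad `W_n` has vertex set `{a, b, 1, …, n}`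
(realized as `Fin 2 ⊕ Fin n`, with `a = Sum.inl 0` and `b = Sum.inl 1`) and arc set
`{(a,b), (b,a)} ∪ {(a,i) : 1 ≤ i ≤ n} ∪ {(b,i) : 1 ≤ i ≤ n}`. -/
def uplinkArc (n : ℕ) : (Fin 2 ⊕ Fin n) → (Fin 2 ⊕ Fin n) → Prop
  | Sum.inl i, Sum.inl j => i ≠ j
  | Sum.inl _, Sum.inr _ => True
  | Sum.inr _, _ => False

/-- The `n`-downlinked mutual dyad: the `n`-uplinked mutual dyad with all arcs reversed. -/
def downlinkArc (n : ℕ) (u v : Fin 2 ⊕ Fin n) : Prop := uplinkArc n v u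

/-! The allowed 2-paths of `W_n` are `aba`, `bab`, `abm` and `bam`. Reading `∂ω = 0` at `aa`,
`bb`, `am` and `ab` shows that a cycle `ω` vanishes on `aba` and `bab`, takes one value `γ m`
on `abm` and `bam`, and `∑ γ m = 0`; so `ω = ∑ γ m • (e_abm + e_bam)`. Conversely
`∂ (e_abm + e_bam) = e_ab + e_ba` does not depend on `m`, so the differences
`(e_abz + e_baz) - (e_abj + e_baj)` are cycles; they are linearly independent because the
`e_abm + e_bam` are, and they span because `∑ γ = 0`. -/

theorem LinearIndependent.apply_sub {ι R M : Type*} [Ring R] [AddCommGroup M] [Module R M]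
    {v : ι → M} (hv : LinearIndependent R v) (z : ι) :
    LinearIndependent R fun j : {j // j ≠ z} => v z - v j := by
  have h := ((affineIndependent_iff_linearIndependent_vsub R v z).1 hv.affineIndependent).neg
  simpa [Pi.neg_def] using h

theorem Fintype.sum_smul_eq_sum_ne_smul_apply_sub {ι R M : Type*} [Fintype ι] [DecidableEq ι]
    [Ring R] [AddCommGroup M] [Module R M] (z : ι) (γ : ι → R) (e : ι → M)
    (hγ : ∑ i, γ i = 0) :
    ∑ i, γ i • e i = ∑ j : {j // j ≠ z}, (-γ j) • (e z - e j) := by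
  rw [Fintype.sum_eq_add_sum_subtype_ne _ z] at hγ ⊢
  rw [eq_neg_of_add_eq_zero_left hγ]
  simp [smul_sub, Finset.sum_add_distrib, Finset.sum_smul]

section Boundary

variable {R V : Type} [CommRing R] [Fintype V] [DecidableEq V]

theorem pathBoundary_single {p : ℕ} (x : Fin (p + 1) → V) (c : R) :
    pathBoundary R V p (Pi.single x c) =
      ∑ j : Fin (p + 1), Pi.single (j.removeNth x) ((-1) ^ (j : ℕ) * c) := by
  funext w
  simp only [pathBoundary, LinearMap.coe_mk, AddHom.coe_mk, Finset.sum_apply, Pi.single_apply]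
  rw [Finset.sum_eq_single x (fun y _ hy => by simp [hy]) (by simp)]
  simp only [if_true, Finset.sum_mul]
  refine Finset.sum_congr rfl fun j _ => ?_
  simp [eq_comm]
  rfl

theorem pathBoundary_single_three (u v t : V) (c : R) :
    pathBoundary R V 2 (Pi.single ![u, v, t] c)
      = Pi.single ![v, t] c - Pi.single ![u, t] c + Pi.single ![u, v] c := by
  rw [pathBoundary_single, Fin.sum_univ_three]
  have h0 : Fin.removeNth 0 ![u, v, t] = ![v, t] := by ext i; fin_cases i <;> rfl
  have h1 : Fin.removeNth 1 ![u, v, t] = ![u, t] := by ext i; fin_cases i <;> rfl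
  have h2 : Fin.removeNth 2 ![u, v, t] = ![u, v] := by ext i; fin_cases i <;> rfl
  simp [h0, h1, h2, sub_eq_add_neg, Pi.single_neg]

end Boundary

theorem isAllowed_three_iff {V : Type} (A : V → V → Prop) (x : Fin 3 → V) :
    IsAllowed A x ↔ A (x 0) (x 1) ∧ A (x 1) (x 2) := by
  refine ⟨fun h => ⟨h 0 (by omega), h 1 (by omega)⟩, fun ⟨h01, h12⟩ i hi => ?_⟩
  match i, hi with
  | 0, _ => exact h01
  | 1, _ => exact h12

section UplinkedDyad

variable {R : Type} [CommRing R] {n : ℕ}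

theorem uplinkArc_isAllowed_three_iff (x : Fin 3 → Fin 2 ⊕ Fin n) :
    IsAllowed (uplinkArc n) x ↔
      x = ![Sum.inl 0, Sum.inl 1, Sum.inl 0] ∨ x = ![Sum.inl 1, Sum.inl 0, Sum.inl 1] ∨
        ∃ m, x = ![Sum.inl 0, Sum.inl 1, Sum.inr m] ∨
          x = ![Sum.inl 1, Sum.inl 0, Sum.inr m] := by
  obtain ⟨x₀, x₁, x₂, rfl⟩ : ∃ x₀ x₁ x₂, x = ![x₀, x₁, x₂] :=
    ⟨x 0, x 1, x 2, by ext i; fin_cases i <;> rfl⟩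
  rw [isAllowed_three_iff]
  rcases x₀ with i | i <;> rcases x₁ with j | j <;> rcases x₂ with k | k <;>
    simp [uplinkArc, Matrix.vecCons_inj]
  · revert i j k; decide
  · fin_cases i <;> fin_cases j <;> simp

theorem eq_of_mem_allowedSubmodule_uplinkArc (ω : (Fin 3 → Fin 2 ⊕ Fin n) → R)
    (hω : ω ∈ allowedSubmodule R (Fin 2 ⊕ Fin n) (uplinkArc n) 3) :
    ω = Pi.single ![Sum.inl 0, Sum.inl 1, Sum.inl 0] (ω ![Sum.inl 0, Sum.inl 1, Sum.inl 0])
      + Pi.single ![Sum.inl 1, Sum.inl 0, Sum.inl 1] (ω ![Sum.inl 1, Sum.inl 0, Sum.inl 1])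
      + ∑ m, (Pi.single ![Sum.inl 0, Sum.inl 1, Sum.inr m] (ω ![Sum.inl 0, Sum.inl 1, Sum.inr m])
        + Pi.single ![Sum.inl 1, Sum.inl 0, Sum.inr m]
          (ω ![Sum.inl 1, Sum.inl 0, Sum.inr m])) := by
  funext x
  by_cases hx : IsAllowed (uplinkArc n) x
  · rcases (uplinkArc_isAllowed_three_iff x).1 hx with rfl | rfl | ⟨m, rfl | rfl⟩ <;>
      simp [Pi.single_apply, Matrix.vecCons_inj]
  · rw [hω x hx]
    rw [uplinkArc_isAllowed_three_iff] at hx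
    push Not at hx
    simp [hx]

theorem uplinkArc_conditions_of_mem_pathCycles (ω : (Fin 3 → Fin 2 ⊕ Fin n) → R)
    (hω : ω ∈ pathCycles R (Fin 2 ⊕ Fin n) (uplinkArc n) 2) :
    ω ![Sum.inl 0, Sum.inl 1, Sum.inl 0] = 0 ∧ ω ![Sum.inl 1, Sum.inl 0, Sum.inl 1] = 0 ∧
      (∀ m, ω ![Sum.inl 1, Sum.inl 0, Sum.inr m] = ω ![Sum.inl 0, Sum.inl 1, Sum.inr m]) ∧
      ∑ m, ω ![Sum.inl 0, Sum.inl 1, Sum.inr m] = 0 := by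
  have hallowed : ω ∈ allowedSubmodule R (Fin 2 ⊕ Fin n) (uplinkArc n) 3 := hω.1.1
  have hk : pathBoundary R (Fin 2 ⊕ Fin n) 2 ω = 0 := hω.2
  rw [eq_of_mem_allowedSubmodule_uplinkArc ω hallowed] at hk
  simp only [map_add, map_sum, pathBoundary_single_three] at hk
  have h_aa := congrFun hk ![Sum.inl 0, Sum.inl 0]
  have h_bb := congrFun hk ![Sum.inl 1, Sum.inl 1]
  have h_ab := congrFun hk ![Sum.inl 0, Sum.inl 1]
  simp [Matrix.vecCons_inj] at h_aa h_bb h_ab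
  refine ⟨h_aa, h_bb, fun m => ?_, by simpa [h_aa, h_bb] using h_ab⟩
  have h_am := congrFun hk ![Sum.inl 0, Sum.inr m]
  simp [Pi.single_apply, Matrix.vecCons_inj, Finset.sum_add_distrib] at h_am
  linear_combination h_am

variable (R) in
def dyadPaths (m : Fin n) : (Fin 3 → Fin 2 ⊕ Fin n) → R :=
  Pi.single ![Sum.inl 0, Sum.inl 1, Sum.inr m] 1 + Pi.single ![Sum.inl 1, Sum.inl 0, Sum.inr m] 1

theorem dyadPaths_mem_allowedSubmodule (m : Fin n) :
    dyadPaths R m ∈ allowedSubmodule R (Fin 2 ⊕ Fin n) (uplinkArc n) 3 := by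
  intro x hx
  rw [uplinkArc_isAllowed_three_iff] at hx
  push Not at hx
  simp [dyadPaths, hx]

theorem pathBoundary_dyadPaths (m : Fin n) :
    pathBoundary R (Fin 2 ⊕ Fin n) 2 (dyadPaths R m) =
      Pi.single ![Sum.inl 0, Sum.inl 1] 1 + Pi.single ![Sum.inl 1, Sum.inl 0] 1 := by
  simp only [dyadPaths, map_add, pathBoundary_single_three]
  abel

theorem dyadPaths_sub_mem_pathCycles (z m : Fin n) :
    dyadPaths R z - dyadPaths R m ∈ pathCycles R (Fin 2 ⊕ Fin n) (uplinkArc n) 2 := by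
  have hzero : pathBoundary R (Fin 2 ⊕ Fin n) 2 (dyadPaths R z - dyadPaths R m) = 0 := by
    rw [map_sub, pathBoundary_dyadPaths, pathBoundary_dyadPaths, sub_self]
  refine ⟨⟨sub_mem (dyadPaths_mem_allowedSubmodule z) (dyadPaths_mem_allowedSubmodule m), ?_⟩,
    hzero⟩
  show pathBoundary R _ 2 _ ∈ allowedSubmodule R _ _ 2
  rw [hzero]
  exact zero_mem _

theorem linearIndependent_dyadPaths : LinearIndependent R fun m : Fin n => dyadPaths R m := by
  rw [Fintype.linearIndependent_iff]
  intro g hg m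
  simpa [dyadPaths, Pi.single_apply, Matrix.vecCons_inj] using
    congrFun hg ![Sum.inl 0, Sum.inl 1, Sum.inr m]

theorem eq_sum_smul_dyadPaths_of_mem_pathCycles (ω : (Fin 3 → Fin 2 ⊕ Fin n) → R)
    (hω : ω ∈ pathCycles R (Fin 2 ⊕ Fin n) (uplinkArc n) 2) :
    ω = ∑ m, ω ![Sum.inl 0, Sum.inl 1, Sum.inr m] • dyadPaths R m := by
  obtain ⟨h_aba, h_bab, h_bam, -⟩ := uplinkArc_conditions_of_mem_pathCycles ω hω
  conv_lhs => rw [eq_of_mem_allowedSubmodule_uplinkArc ω hω.1.1]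
  simp [h_aba, h_bab, h_bam, dyadPaths, smul_add, ← Pi.single_smul']

end UplinkedDyad

/-- For `n ≥ 2` and `W_n` the `n`-uplinked mutual dyad over a field `F`,
the collection `{e_{(a,b,1)} + e_{(b,a,1)} − e_{(a,b,j)} − e_{(b,a,j)} : 2 ≤ j ≤ n}`
(indexed here by the nonzero elements of `Fin n`, with `1` realized as `0 : Fin n`)
is a basis for `Z_2 = ker ∂_2`, the kernel of the boundary restricted to `Ω_2(W_n)`;
in particular `dim Z_2 = n − 1`. -/
theorem uplinked_dyad_basis_Z2 (F : Type) [Field F] (n : ℕ) (hn : 2 ≤ n) :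
    (∃ bas : Module.Basis {j : Fin n // j ≠ ⟨0, by omega⟩} F
        (pathCycles F (Fin 2 ⊕ Fin n) (uplinkArc n) 2),
      ∀ j : {j : Fin n // j ≠ ⟨0, by omega⟩},
        (bas j : (Fin 3 → Fin 2 ⊕ Fin n) → F)
          = Pi.single ![Sum.inl 0, Sum.inl 1, Sum.inr ⟨0, by omega⟩] (1 : F)
            + Pi.single ![Sum.inl 1, Sum.inl 0, Sum.inr ⟨0, by omega⟩] 1
            - Pi.single ![Sum.inl 0, Sum.inl 1, Sum.inr j.1] 1
            - Pi.single ![Sum.inl 1, Sum.inl 0, Sum.inr j.1] 1)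
    ∧ Module.finrank F (pathCycles F (Fin 2 ⊕ Fin n) (uplinkArc n) 2) = n - 1 := by
  let z : Fin n := ⟨0, by omega⟩
  let b (j : {j // j ≠ z}) : pathCycles F (Fin 2 ⊕ Fin n) (uplinkArc n) 2 :=
    ⟨_, dyadPaths_sub_mem_pathCycles z j.1⟩
  have hli : LinearIndependent F b :=
    .of_comp (Submodule.subtype _) ((linearIndependent_dyadPaths (R := F)).apply_sub z)
  have hsp : ⊤ ≤ Submodule.span F (Set.range b) := by
    rintro ⟨ω, hω⟩ -
    have hsum := (uplinkArc_conditions_of_mem_pathCycles ω hω).2.2.2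
    have hω' := (eq_sum_smul_dyadPaths_of_mem_pathCycles ω hω).trans
      (Fintype.sum_smul_eq_sum_ne_smul_apply_sub z _ _ hsum)
    refine (Submodule.mem_span_range_iff_exists_fun F).2
      ⟨fun j => -ω ![Sum.inl 0, Sum.inl 1, Sum.inr j], Subtype.ext ?_⟩
    simpa [b] using hω'.symm
  refine ⟨⟨.mk hli hsp, fun j => ?_⟩, ?_⟩
  · rw [Module.Basis.mk_apply]
    simp only [b, dyadPaths]
    abel
  · rw [Module.finrank_eq_card_basis (.mk hli hsp), Fintype.card_subtype_compl]
    simp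
end

section
/- There exists a loopless digraph D on 6 vertices whose dimension-1 path homology over the ring ℤ has nontrivial torsion; that is, H_1(D; ℤ) is not a free abelian group. -/
open Finset

/-! ### Auxiliary material for the torsion example -/

/-- The arc relation of our example digraph, as a `Bool`-valued table. -/
def arcB : Fin 6 → Fin 6 → Bool :=
  ![![false, true, false, true, false, false],
    ![false, false, true, true, false, false],
    ![false, true, false, false, true, false],
    ![false, false, false, false, true, false],
    ![true, false, true, false, false, false],
    ![true, false, false, true, true, false]]

/-- The arc relation of our example digraph (a loopless digraph on 6 vertices). -/
def myA : Fin 6 → Fin 6 → Prop := fun u v => arcB u v = true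

instance myA_dec : ∀ u v, Decidable (myA u v) := fun u v =>
  instDecidableEqBool (arcB u v) true

/-- Dependent decidability of a proposition guarded by a decidable hypothesis. -/
instance decGuard {p : Prop} [dp : Decidable p] {q : p → Prop} [dq : ∀ h, Decidable (q h)] :
    Decidable (∀ h, q h) :=
  match dp with
  | isTrue h =>
      match dq h with
      | isTrue hq => isTrue fun _ => hq
      | isFalse hq => isFalse fun f => hq (f h)
  | isFalse h => isTrue fun h' => absurd h' h

instance isAllowed_dec {q : ℕ} (x : Fin q → Fin 6) : Decidable (IsAllowed myA x) :=
  decidable_of_iff (∀ i : Fin q, ∀ h : (i : ℕ) + 1 < q, myA (x ⟨(i : ℕ), Nat.lt_of_succ_lt h⟩)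
      (x ⟨(i : ℕ) + 1, h⟩))
    ⟨fun H i h => H ⟨i, Nat.lt_of_succ_lt h⟩ h, fun H i h => H (i : ℕ) h⟩

lemma eta1 (w : Fin 1 → Fin 6) : ![w 0] = w := by
  funext i
  fin_cases i
  rfl

lemma eta2 (w : Fin 2 → Fin 6) : ![w 0, w 1] = w := by
  funext i; fin_cases i <;> rfl

lemma eta3 (x : Fin 3 → Fin 6) : ![x 0, x 1, x 2] = x := by
  funext i; fin_cases i <;> rfl

/-- The torsion `1`-cycle `z = e_{(2,4)} + e_{(4,2)}`. -/
def zc : (Fin 2 → Fin 6) → ℤ := fun w => if w = ![2, 4] ∨ w = ![4, 2] then 1 else 0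

/-- Dirac delta at a `2`-path. -/
def dl3 (y : Fin 3 → Fin 6) : (Fin 3 → Fin 6) → ℤ := fun x => if x = y then 1 else 0

/-- An invariant `2`-path `ω` with `∂ω = 2 z`. -/
def wc : (Fin 3 → Fin 6) → ℤ :=
  dl3 ![0,1,3] + dl3 ![1,2,4] - dl3 ![1,3,4] - dl3 ![2,1,2] + dl3 ![2,4,2] - dl3 ![4,0,1]
    + dl3 ![4,2,1] + dl3 ![5,0,3] + dl3 ![5,3,4] + dl3 ![5,4,0]

/-- A mod-2 functional vanishing on boundaries of allowed `2`-chains but not on `z`. -/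
def cf : (Fin 2 → Fin 6) → ZMod 2 := fun w =>
  if w = ![0,2] ∨ w = ![1,1] ∨ w = ![1,2] ∨ w = ![2,0] ∨ w = ![2,2] ∨ w = ![2,4] ∨ w = ![4,4]
  then 1 else 0

lemma pathBoundary_apply (p : ℕ) (f : (Fin (p + 1) → Fin 6) → ℤ) (w : Fin p → Fin 6) :
    pathBoundary ℤ (Fin 6) p f w = ∑ x : Fin (p + 1) → Fin 6,
      (∑ j : Fin (p + 1), (-1 : ℤ) ^ (j : ℕ) *
        (if (fun i => x (j.succAbove i)) = w then 1 else 0)) * f x := rfl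

lemma zc_supp : ∀ x, ¬ IsAllowed myA x → zc x = 0 := by
  intro x hx
  have h : ∀ d e : Fin 6, ¬ IsAllowed myA ![d, e] → zc ![d, e] = 0 := by decide
  have h2 := h (x 0) (x 1)
  rw [eta2] at h2
  exact h2 hx

lemma wc_supp : ∀ x, ¬ IsAllowed myA x → wc x = 0 := by
  intro x hx
  have h : ∀ a b c : Fin 6, ¬ IsAllowed myA ![a, b, c] → wc ![a, b, c] = 0 := by decide
  have h2 := h (x 0) (x 1) (x 2)
  rw [eta3] at h2
  exact h2 hx

lemma zc_ker_aux : ∀ d : Fin 6, (∑ x : Fin 2 → Fin 6,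
    (∑ j : Fin 2, (-1 : ℤ) ^ (j : ℕ) *
      (if (fun i => x (j.succAbove i)) = ![d] then 1 else 0)) * zc x) = 0 := by decide

lemma zc_ker : pathBoundary ℤ (Fin 6) 1 zc = 0 := by
  funext w
  have h := zc_ker_aux (w 0)
  rw [eta1] at h
  exact h

lemma bd_dl3 (y : Fin 3 → Fin 6) : pathBoundary ℤ (Fin 6) 2 (dl3 y) = fun w =>
    ∑ j : Fin 3, (-1 : ℤ) ^ (j : ℕ) *
      (if (fun i => y (j.succAbove i)) = w then 1 else 0) := by
  funext w
  rw [pathBoundary_apply, Finset.sum_eq_single y]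
  · simp [dl3]
  · intro b _ hb
    simp [dl3, hb]
  · intro h
    exact absurd (Finset.mem_univ y) h

/-- The boundary of `ω`, written out explicitly. -/
def bdwc : (Fin 2 → Fin 6) → ℤ := fun w =>
  (∑ j : Fin 3, (-1:ℤ)^(j:ℕ) * (if (fun i => (![0,1,3] : Fin 3 → Fin 6) (j.succAbove i)) = w then 1 else 0))
  + (∑ j : Fin 3, (-1:ℤ)^(j:ℕ) * (if (fun i => (![1,2,4] : Fin 3 → Fin 6) (j.succAbove i)) = w then 1 else 0))
  - (∑ j : Fin 3, (-1:ℤ)^(j:ℕ) * (if (fun i => (![1,3,4] : Fin 3 → Fin 6) (j.succAbove i)) = w then 1 else 0))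
  - (∑ j : Fin 3, (-1:ℤ)^(j:ℕ) * (if (fun i => (![2,1,2] : Fin 3 → Fin 6) (j.succAbove i)) = w then 1 else 0))
  + (∑ j : Fin 3, (-1:ℤ)^(j:ℕ) * (if (fun i => (![2,4,2] : Fin 3 → Fin 6) (j.succAbove i)) = w then 1 else 0))
  - (∑ j : Fin 3, (-1:ℤ)^(j:ℕ) * (if (fun i => (![4,0,1] : Fin 3 → Fin 6) (j.succAbove i)) = w then 1 else 0))
  + (∑ j : Fin 3, (-1:ℤ)^(j:ℕ) * (if (fun i => (![4,2,1] : Fin 3 → Fin 6) (j.succAbove i)) = w then 1 else 0))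
  + (∑ j : Fin 3, (-1:ℤ)^(j:ℕ) * (if (fun i => (![5,0,3] : Fin 3 → Fin 6) (j.succAbove i)) = w then 1 else 0))
  + (∑ j : Fin 3, (-1:ℤ)^(j:ℕ) * (if (fun i => (![5,3,4] : Fin 3 → Fin 6) (j.succAbove i)) = w then 1 else 0))
  + (∑ j : Fin 3, (-1:ℤ)^(j:ℕ) * (if (fun i => (![5,4,0] : Fin 3 → Fin 6) (j.succAbove i)) = w then 1 else 0))

lemma wc_bd : pathBoundary ℤ (Fin 6) 2 wc = (2 : ℤ) • zc := by
  have h1 : pathBoundary ℤ (Fin 6) 2 wc = bdwc := by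
    unfold wc
    simp only [map_add, map_sub, bd_dl3]
    funext w
    simp only [Pi.add_apply, Pi.sub_apply]
    rfl
  rw [h1]
  funext w
  rw [Pi.smul_apply, smul_eq_mul]
  have h : ∀ d e : Fin 6, bdwc ![d, e] = 2 * zc ![d, e] := by decide
  have h2 := h (w 0) (w 1)
  rw [eta2] at h2
  exact h2

lemma cf_kills_aux : ∀ a b c : Fin 6, IsAllowed myA ![a, b, c] →
    (∑ w : Fin 2 → Fin 6, cf w * (∑ j : Fin 3, (-1 : ZMod 2) ^ (j : ℕ) *
      (if (fun i => (![a, b, c] : Fin 3 → Fin 6) (j.succAbove i)) = w then 1 else 0))) = 0 := by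
  decide

lemma cf_kills : ∀ x : Fin 3 → Fin 6, IsAllowed myA x →
    (∑ w : Fin 2 → Fin 6, cf w * (∑ j : Fin 3, (-1 : ZMod 2) ^ (j : ℕ) *
      (if (fun i => x (j.succAbove i)) = w then 1 else 0))) = 0 := by
  intro x
  have h := cf_kills_aux (x 0) (x 1) (x 2)
  rw [eta3] at h
  exact h

lemma cf_z : (∑ w : Fin 2 → Fin 6, cf w * ((zc w : ℤ) : ZMod 2)) = 1 := by decide

lemma phi_boundary_eq_zero (f : (Fin 3 → Fin 6) → ℤ)
    (hf : ∀ x, ¬ IsAllowed myA x → f x = 0) :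
    (∑ w : Fin 2 → Fin 6, cf w * ((pathBoundary ℤ (Fin 6) 2 f w : ℤ) : ZMod 2)) = 0 := by
  simp only [pathBoundary_apply]
  push_cast
  have gen : ∀ (C : (Fin 3 → Fin 6) → (Fin 2 → Fin 6) → ZMod 2) (F : (Fin 3 → Fin 6) → ZMod 2),
      (∑ w : Fin 2 → Fin 6, cf w * ∑ x : Fin 3 → Fin 6, C x w * F x)
      = ∑ x : Fin 3 → Fin 6, (∑ w : Fin 2 → Fin 6, cf w * C x w) * F x := by
    intro C F
    simp only [Finset.mul_sum, ← mul_assoc]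
    rw [Finset.sum_comm]
    simp only [Finset.sum_mul]
  rw [gen (fun x w => ∑ j : Fin 3, (-1 : ZMod 2) ^ (j : ℕ) *
      (if (fun i => x (j.succAbove i)) = w then 1 else 0)) (fun x => ((f x : ℤ) : ZMod 2))]
  refine Finset.sum_eq_zero fun x _ => ?_
  by_cases hx : IsAllowed myA x
  · rw [cf_kills x hx, zero_mul]
  · rw [hf x hx]
    push_cast
    rw [mul_zero]

lemma zc_mem_cycles : zc ∈ pathCycles ℤ (Fin 6) myA 1 := by
  show zc ∈ invariantPaths ℤ (Fin 6) myA 1 ⊓ LinearMap.ker (pathBoundary ℤ (Fin 6) 1)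
  refine Submodule.mem_inf.mpr ⟨Submodule.mem_inf.mpr ⟨zc_supp, ?_⟩, zc_ker⟩
  show pathBoundary ℤ (Fin 6) 1 zc ∈ allowedSubmodule ℤ (Fin 6) myA 1
  intro x hx
  exact absurd (fun i h => absurd h (by omega)) hx

lemma wc_mem_inv : wc ∈ invariantPaths ℤ (Fin 6) myA 2 := by
  refine Submodule.mem_inf.mpr ⟨wc_supp, ?_⟩
  show pathBoundary ℤ (Fin 6) 2 wc ∈ allowedSubmodule ℤ (Fin 6) myA 2
  rw [wc_bd]
  exact Submodule.smul_mem _ _ zc_supp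

/-- there exists a loopless digraph `D` on 6 vertices whose dimension-1
path homology over the ring `ℤ` has nontrivial torsion; that is, `H_1(D; ℤ)` is not a
free abelian group (equivalently, not a free `ℤ`-module). -/
theorem exists_digraph_with_torsion :
    ∃ A : Fin 6 → Fin 6 → Prop, (∀ v, ¬ A v v)
      ∧ ¬ Module.Free ℤ (pathHomology ℤ (Fin 6) A 1) := by
  refine ⟨myA, by decide, ?_⟩
  intro hFree
  let zel : pathCycles ℤ (Fin 6) myA 1 := ⟨zc, zc_mem_cycles⟩
  have h2 : (2 : ℤ) • (Submodule.Quotient.mk zel : pathHomology ℤ (Fin 6) myA 1) = 0 := by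
    rw [← Submodule.Quotient.mk_smul, Submodule.Quotient.mk_eq_zero, Submodule.mem_comap]
    refine Submodule.mem_map.mpr ⟨wc, wc_mem_inv, ?_⟩
    rw [wc_bd]
    rfl
  have hq : (Submodule.Quotient.mk zel : pathHomology ℤ (Fin 6) myA 1) ≠ 0 := by
    intro h0
    rw [Submodule.Quotient.mk_eq_zero, Submodule.mem_comap] at h0
    obtain ⟨w', hw', hb⟩ := Submodule.mem_map.mp h0
    have h1 := phi_boundary_eq_zero w' (Submodule.mem_inf.mp hw').1
    have hb' : pathBoundary ℤ (Fin 6) 2 w' = zc := hb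
    simp only [hb'] at h1
    rw [cf_z] at h1
    exact one_ne_zero h1
  exact hq ((smul_eq_zero.mp h2).resolve_left (by norm_num))
end
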